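/- For every ℓ ∈ [0,1) there exists C > 0, independent of N and T, such that for all N ≥ 1, T > 0 and all continuous u, v : [0,T] → H^ℓ(ℝ) with ‖I_N u‖_{Y¹_{0,T}} < ∞ and ‖I_N v‖_{Y¹_{0,T}} < ∞: ∫_0^T ‖(I−∂ₓₓ)⁻¹ I_N ∂ₓ(u(s) v(s))‖_{H¹} ds ≤ C T ‖I_N u‖_{Y¹_{0,T}} ‖I_N v‖_{Y¹_{0,T}}. -/

import Mathlib

noncomputable section

open MeasureTheory Real Set Filter
open scoped ENNReal NNReal Convolution ComplexConjugate

/-- Frequency-side state space `L²(ℝ, ℂ)`: an element represents the Fourier–Plancherel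
transform `ĝ` of a function `g ∈ L²(ℝ)` (unitary normalization, so that Plancherel is an
isometry and `(uv)^ = û ⋆ v̂`). -/
abbrev V : Type := Lp ℂ 2 (volume : Measure ℝ)

/-- The I-method multiplier `m_N(ξ) = min (1, (|ξ|/N)^{ℓ-1})`, with `m_N 0 = 1`. -/
def mN (ℓ N ξ : ℝ) : ℝ := if ξ = 0 then 1 else min 1 ((|ξ| / N) ^ (ℓ - 1))

/-- The `H^s` norm, frequency side: `(∫ (1+ξ²)^s |ĝ(ξ)|² dξ)^{1/2}`. -/
def HsE (s : ℝ) (G : ℝ → ℂ) : ℝ≥0∞ :=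
  (∫⁻ ξ : ℝ, ENNReal.ofReal ((1 + ξ ^ 2) ^ s) * (‖G ξ‖₊ : ℝ≥0∞) ^ 2) ^ (1 / 2 : ℝ)

/-- The `H^s` norm as a real number. -/
def Hr (s : ℝ) (G : ℝ → ℂ) : ℝ := (HsE s G).toReal

/-- Membership in `H^s`, frequency side. -/
def MemHs (s : ℝ) (G : ℝ → ℂ) : Prop :=
  AEStronglyMeasurable G volume ∧ HsE s G < ⊤

/-- Applying the operator `I_N`, frequency side. -/
def IN (ℓ N : ℝ) (G : ℝ → ℂ) : ℝ → ℂ := fun ξ => (mN ℓ N ξ : ℂ) * G ξ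

/-- The `Y^s_{τ,T}` norm of a curve of (frequency-side) functions. -/
def YE (s τ T : ℝ) (u : ℝ → ℝ → ℂ) : ℝ≥0∞ :=
  (⨆ t ∈ Icc τ (τ + T), HsE s (u t)) +
    (∫⁻ t in Icc τ (τ + T), HsE s (u t) ^ 2) ^ (1 / 2 : ℝ)

/-- Continuity of a curve in the `H^s` norm. -/
def HContOn (s : ℝ) (Q : ℝ → V) (A : Set ℝ) : Prop :=
  ∀ t ∈ A, ∀ ε : ℝ≥0∞, 0 < ε → ∃ δ > (0 : ℝ), ∀ t' ∈ A, |t' - t| < δ →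
    HsE s ((Q t' - Q t : V) : ℝ → ℂ) < ε

/-- Frequency side of the product of two `L²` functions: `(uv)^ = û ⋆ v̂`. -/
def prodHat (U W : ℝ → ℂ) : ℝ → ℂ :=
  convolution U W (ContinuousLinearMap.mul ℂ ℂ) volume

lemma memLp_resolventFun (g : V) :
    MemLp (fun ξ : ℝ => (((1 + ξ ^ 2)⁻¹ : ℝ) : ℂ) * (g : ℝ → ℂ) ξ) 2 (volume : Measure ℝ) := by
  refine (Lp.memLp g).of_le ?_ ?_
  · exact (Complex.continuous_ofReal.comp ((continuous_const.add (continuous_pow 2)).inv₀ (fun ξ => show (1 : ℝ) + ξ ^ 2 ≠ 0 by positivity))).aestronglyMeasurable.mul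
      (Lp.aestronglyMeasurable g)
  · filter_upwards with ξ
    have h0 : (0 : ℝ) < 1 + ξ ^ 2 := by positivity
    have h1 : ‖(((1 + ξ ^ 2)⁻¹ : ℝ) : ℂ)‖ ≤ 1 := by
      rw [Complex.norm_real, Real.norm_eq_abs, abs_of_pos (by positivity)]
      rw [inv_le_one_iff₀]
      right; nlinarith
    calc ‖(((1 + ξ ^ 2)⁻¹ : ℝ) : ℂ) * (g : ℝ → ℂ) ξ‖
        = ‖(((1 + ξ ^ 2)⁻¹ : ℝ) : ℂ)‖ * ‖(g : ℝ → ℂ) ξ‖ := norm_mul _ _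
      _ ≤ 1 * ‖(g : ℝ → ℂ) ξ‖ := by gcongr
      _ = ‖(g : ℝ → ℂ) ξ‖ := one_mul _

/-- The resolvent `(I − ∂ₓₓ)⁻¹`, frequency side, as a map `L² → L²`. -/
def resolv (g : V) : V := MemLp.toLp _ (memLp_resolventFun g)

/-- Frequency side of `(I − ∂ₓₓ)⁻¹ ∂ₓ (u²)`. -/
def NLterm (g : V) : ℝ → ℂ := fun ξ =>
  Complex.I * ξ * (((1 + ξ ^ 2)⁻¹ : ℝ) : ℂ) * prodHat (g : ℝ → ℂ) (g : ℝ → ℂ) ξ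

/-- `U` is (the frequency side of) a global mild solution of the forced damped BBM equation
`u_t − u_{xxt} + u − u_{xx} + u u_x = f` with initial data `Φ` and force `F`. -/
def IsGlobalMildSolution (ℓ : ℝ) (F : ℝ → V) (Φ : V) (U : ℝ → V) : Prop :=
  HContOn ℓ U (Ici 0) ∧ U 0 = Φ ∧
  ∃ W : ℝ → V,
    (∀ s : ℝ, (W s : ℝ → ℂ) =ᵐ[volume] NLterm (U s)) ∧
    ∀ t ≥ (0 : ℝ), U t = Real.exp (-t) • Φ +
      ∫ s in (0 : ℝ)..t, Real.exp (-(t - s)) • (resolv (F s) - (2⁻¹ : ℝ) • W s)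

/-- `U` is (the frequency side of) a mild solution on `[0, T]`. -/
def IsMildSolutionOn (ℓ T : ℝ) (F : ℝ → V) (Φ : V) (U : ℝ → V) : Prop :=
  HContOn ℓ U (Icc 0 T) ∧ U 0 = Φ ∧
  ∃ W : ℝ → V,
    (∀ s : ℝ, (W s : ℝ → ℂ) =ᵐ[volume] NLterm (U s)) ∧
    ∀ t ∈ Icc (0 : ℝ) T, U t = Real.exp (-t) • Φ +
      ∫ s in (0 : ℝ)..t, Real.exp (-(t - s)) • (resolv (F s) - (2⁻¹ : ℝ) • W s)

/-- Frequency side of `(I − ∂ₓₓ)⁻¹ I_N ∂ₓ (½q² + qv + ½v²)`. -/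
def NL2 (ℓ N : ℝ) (q v : V) : ℝ → ℂ := fun ξ =>
  Complex.I * ξ * (mN ℓ N ξ : ℂ) * (((1 + ξ ^ 2)⁻¹ : ℝ) : ℂ) *
    ((2⁻¹ : ℂ) * prodHat (q : ℝ → ℂ) (q : ℝ → ℂ) ξ +
      prodHat (q : ℝ → ℂ) (v : ℝ → ℂ) ξ +
      (2⁻¹ : ℂ) * prodHat (v : ℝ → ℂ) (v : ℝ → ℂ) ξ)

-- Auxiliary lemmas
def rho (ℓ N ξ : ℝ) : ℝ := Real.sqrt (1 + ξ ^ 2) * mN ℓ N ξ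

variable {ℓ N ξ η : ℝ}

lemma mN_nonneg (hN : 0 < N) : 0 ≤ mN ℓ N ξ := by
  unfold mN; split
  · norm_num
  · exact le_min zero_le_one (Real.rpow_nonneg (by positivity) _)

lemma mN_le_one : mN ℓ N ξ ≤ 1 := by
  unfold mN; split
  · exact le_refl _
  · exact min_le_left _ _

lemma mN_eq_one (hN : 0 < N) (hl1 : ℓ ≤ 1) (h : |ξ| ≤ N) : mN ℓ N ξ = 1 := by
  unfold mN; split
  · rfl
  · rename_i hξ
    refine min_eq_left (Real.one_le_rpow_of_pos_of_le_one_of_nonpos ?_ ?_ (by linarith))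
    · positivity
    · rw [div_le_one hN]; exact h

lemma mN_eq_rpow (hN : 0 < N) (hl1 : ℓ ≤ 1) (h : N < |ξ|) :
    mN ℓ N ξ = (|ξ| / N) ^ (ℓ - 1) := by
  have hξ : ξ ≠ 0 := by intro h0; rw [h0, abs_zero] at h; linarith
  unfold mN
  rw [if_neg hξ]
  refine min_eq_right (Real.rpow_le_one_of_one_le_of_nonpos ?_ (by linarith))
  rw [le_div_iff₀ hN]; linarith

lemma mN_ge (hN : 0 < N) (hl0 : 0 ≤ ℓ) (hl1 : ℓ ≤ 1) (h : N < |ξ|) :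
    N / |ξ| ≤ mN ℓ N ξ := by
  rw [mN_eq_rpow hN hl1 h]
  have h1 : 1 ≤ |ξ| / N := by rw [le_div_iff₀ hN]; linarith
  calc N / |ξ| = (|ξ| / N) ^ (-1 : ℝ) := by
        rw [Real.rpow_neg_one, inv_div]
    _ ≤ (|ξ| / N) ^ (ℓ - 1) :=
        Real.rpow_le_rpow_of_exponent_le h1 (by linarith)

lemma sqrt_one_add_sq_ge_abs : |ξ| ≤ Real.sqrt (1 + ξ ^ 2) := by
  rw [← Real.sqrt_sq_eq_abs]
  exact Real.sqrt_le_sqrt (by nlinarith)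

lemma N_le_rho (hN : 0 < N) (hl0 : 0 ≤ ℓ) (hl1 : ℓ ≤ 1) (h : N < |ξ|) :
    N ≤ rho ℓ N ξ := by
  have hξ : (0:ℝ) < |ξ| := lt_trans hN h
  have h1 : N / |ξ| ≤ mN ℓ N ξ := mN_ge hN hl0 hl1 h
  have h2 : |ξ| * (N / |ξ|) ≤ rho ℓ N ξ := by
    unfold rho
    exact mul_le_mul sqrt_one_add_sq_ge_abs h1 (by positivity) (Real.sqrt_nonneg _)
  calc N = |ξ| * (N / |ξ|) := by field_simp
    _ ≤ _ := h2

lemma one_le_rho (hN : 1 ≤ N) (hl0 : 0 ≤ ℓ) (hl1 : ℓ ≤ 1) : 1 ≤ rho ℓ N ξ := by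
  rcases le_or_gt |ξ| N with h | h
  · unfold rho
    rw [mN_eq_one (by linarith) hl1 h, mul_one]
    nlinarith [Real.sq_sqrt (show (0:ℝ) ≤ 1 + ξ ^ 2 by positivity),
      Real.sqrt_nonneg (1 + ξ ^ 2)]
  · linarith [N_le_rho (by linarith : (0:ℝ) < N) hl0 hl1 h]

lemma rho_nonneg (hN : 0 < N) : 0 ≤ rho ℓ N ξ := mul_nonneg (Real.sqrt_nonneg _) (mN_nonneg hN)

lemma rho_le_of_le (hN : 1 ≤ N) (hl0 : 0 ≤ ℓ) (hl1 : ℓ ≤ 1) (h : |ξ| ≤ 2 * |η|) :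
    rho ℓ N ξ ≤ 2 * Real.sqrt 2 * rho ℓ N η := by
  have hN0 : (0:ℝ) < N := by linarith
  have hs2 : (1:ℝ) ≤ Real.sqrt 2 := by
    rw [show (1:ℝ) = Real.sqrt 1 from (Real.sqrt_one).symm]
    exact Real.sqrt_le_sqrt one_le_two
  rcases le_or_gt |η| N with hη | hη
  · -- mN η = 1, rho η = sqrt(1+η²)
    have hrη : rho ℓ N η = Real.sqrt (1 + η ^ 2) := by
      unfold rho; rw [mN_eq_one hN0 hl1 hη, mul_one]
    have h1 : rho ℓ N ξ ≤ Real.sqrt (1 + ξ ^ 2) := by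
      unfold rho
      calc Real.sqrt (1 + ξ ^ 2) * mN ℓ N ξ ≤ Real.sqrt (1 + ξ ^ 2) * 1 :=
            mul_le_mul_of_nonneg_left mN_le_one (Real.sqrt_nonneg _)
        _ = _ := mul_one _
    have h2 : Real.sqrt (1 + ξ ^ 2) ≤ 2 * Real.sqrt (1 + η ^ 2) := by
      rw [show 2 * Real.sqrt (1 + η ^ 2) = Real.sqrt (4 * (1 + η ^ 2)) by
        rw [show (4:ℝ) * (1 + η^2) = 2^2 * (1+η^2) by ring, Real.sqrt_mul (by positivity),
          Real.sqrt_sq (by norm_num)]]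
      refine Real.sqrt_le_sqrt ?_
      have := abs_nonneg η
      nlinarith [sq_abs ξ, sq_abs η, mul_self_le_mul_self (abs_nonneg ξ) h]
    rw [hrη]
    nlinarith [Real.sqrt_nonneg (1 + η^2)]
  · -- N < |η|
    have hρη : N ≤ rho ℓ N η := N_le_rho hN0 hl0 hl1 hη
    rcases le_or_gt |ξ| N with hξ | hξ
    · have h1 : rho ℓ N ξ ≤ Real.sqrt 2 * N := by
        unfold rho
        rw [mN_eq_one hN0 hl1 hξ, mul_one]
        calc Real.sqrt (1 + ξ ^ 2) ≤ Real.sqrt (2 * N ^ 2) := by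
              refine Real.sqrt_le_sqrt ?_
              nlinarith [sq_abs ξ, mul_self_le_mul_self (abs_nonneg ξ) hξ]
          _ = Real.sqrt 2 * N := by
              rw [Real.sqrt_mul (by norm_num), Real.sqrt_sq (by linarith)]
      calc rho ℓ N ξ ≤ Real.sqrt 2 * N := h1
        _ ≤ Real.sqrt 2 * rho ℓ N η := by nlinarith
        _ ≤ 2 * Real.sqrt 2 * rho ℓ N η := by nlinarith [rho_nonneg (ℓ := ℓ) (N := N) (ξ := η) (by linarith)]
    · -- both high
      have hξ0 : (0:ℝ) < |ξ| := lt_trans hN0 hξ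
      have hη0 : (0:ℝ) < |η| := lt_trans hN0 hη
      have key : ∀ x : ℝ, 0 < x → x * (x / N) ^ (ℓ - 1) = N * (x / N) ^ ℓ := by
        intro x hx
        have : (x / N) ^ ℓ = (x / N) ^ (ℓ - 1) * (x / N) := by
          rw [← Real.rpow_add_one (by positivity) (ℓ - 1)]
          ring_nf
        rw [this]
        field_simp
      have h1 : rho ℓ N ξ ≤ Real.sqrt 2 * (|ξ| * (|ξ| / N) ^ (ℓ - 1)) := by
        unfold rho
        rw [mN_eq_rpow hN0 hl1 hξ]
        have hsq : Real.sqrt (1 + ξ ^ 2) ≤ Real.sqrt 2 * |ξ| := by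
          rw [show Real.sqrt 2 * |ξ| = Real.sqrt (2 * ξ^2) by
            rw [Real.sqrt_mul (by norm_num), Real.sqrt_sq_eq_abs]]
          refine Real.sqrt_le_sqrt ?_
          nlinarith [sq_abs ξ]
        have hrp : (0:ℝ) ≤ (|ξ| / N) ^ (ℓ - 1) := Real.rpow_nonneg (by positivity) _
        calc Real.sqrt (1+ξ^2) * (|ξ|/N)^(ℓ-1) ≤ (Real.sqrt 2 * |ξ|) * (|ξ|/N)^(ℓ-1) :=
              mul_le_mul_of_nonneg_right hsq hrp
          _ = Real.sqrt 2 * (|ξ| * (|ξ|/N)^(ℓ-1)) := by ring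
      have h2 : |ξ| * (|ξ| / N) ^ (ℓ - 1) ≤ 2 * (|η| * (|η| / N) ^ (ℓ - 1)) := by
        rw [key _ hξ0, key _ hη0]
        have e1 : (|ξ| / N) ^ ℓ ≤ (2 * |η| / N) ^ ℓ :=
          Real.rpow_le_rpow (by positivity) (by gcongr) hl0
        have e2 : (2 * |η| / N) ^ ℓ ≤ 2 * (|η| / N) ^ ℓ := by
          rw [show 2 * |η| / N = 2 * (|η| / N) by ring,
            Real.mul_rpow (by norm_num) (by positivity)]
          have : (2:ℝ) ^ ℓ ≤ 2 ^ (1:ℝ) := Real.rpow_le_rpow_of_exponent_le one_le_two hl1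
          rw [Real.rpow_one] at this
          nlinarith [Real.rpow_nonneg (show (0:ℝ) ≤ |η|/N by positivity) ℓ]
        nlinarith
      have h3 : |η| * (|η| / N) ^ (ℓ - 1) ≤ rho ℓ N η := by
        unfold rho
        rw [mN_eq_rpow hN0 hl1 hη]
        exact mul_le_mul_of_nonneg_right sqrt_one_add_sq_ge_abs
          (Real.rpow_nonneg (by positivity) _)
      nlinarith

lemma rho_submul (hN : 1 ≤ N) (hl0 : 0 ≤ ℓ) (hl1 : ℓ ≤ 1) (ξ η : ℝ) :
    rho ℓ N ξ ≤ 2 * Real.sqrt 2 * (rho ℓ N η * rho ℓ N (ξ - η)) := by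
  have hs2 : (0:ℝ) ≤ 2 * Real.sqrt 2 := by positivity
  rcases le_total |ξ - η| |η| with h | h
  · have h2 : |ξ| ≤ 2 * |η| := by
      calc |ξ| = |η + (ξ - η)| := by ring_nf
        _ ≤ |η| + |ξ - η| := abs_add_le _ _
        _ ≤ 2 * |η| := by linarith
    calc rho ℓ N ξ ≤ 2 * Real.sqrt 2 * rho ℓ N η := rho_le_of_le hN hl0 hl1 h2
      _ ≤ _ := by
          have h1 := one_le_rho (ℓ := ℓ) (N := N) (ξ := ξ - η) hN hl0 hl1
          have h0 := rho_nonneg (ℓ := ℓ) (N := N) (ξ := η) (by linarith)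
          exact mul_le_mul_of_nonneg_left (le_mul_of_one_le_right h0 h1) hs2
  · have h2 : |ξ| ≤ 2 * |ξ - η| := by
      calc |ξ| = |η + (ξ - η)| := by ring_nf
        _ ≤ |η| + |ξ - η| := abs_add_le _ _
        _ ≤ 2 * |ξ - η| := by linarith
    calc rho ℓ N ξ ≤ 2 * Real.sqrt 2 * rho ℓ N (ξ - η) := rho_le_of_le hN hl0 hl1 h2
      _ ≤ _ := by
          have h1 := one_le_rho (ℓ := ℓ) (N := N) (ξ := η) hN hl0 hl1
          have h0 := rho_nonneg (ℓ := ℓ) (N := N) (ξ := ξ - η) (by linarith)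
          calc 2 * Real.sqrt 2 * rho ℓ N (ξ - η)
              ≤ 2 * Real.sqrt 2 * (rho ℓ N (ξ - η) * rho ℓ N η) :=
                mul_le_mul_of_nonneg_left (le_mul_of_one_le_right h0 h1) hs2
            _ = _ := by ring

lemma measurable_mN : Measurable (mN ℓ N) := by
  unfold mN
  refine Measurable.ite (measurableSet_eq) measurable_const ?_
  measurability

lemma measurable_rho : Measurable (rho ℓ N) := by
  unfold rho
  exact (Real.continuous_sqrt.comp (by continuity)).measurable.mul measurable_mN

lemma key_bilinear (hl0 : 0 ≤ ℓ) (hl1 : ℓ ≤ 1) (hN : 1 ≤ N)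
    {U W : ℝ → ℂ} (hU : Measurable U) (hW : Measurable W) :
    HsE 1 (fun ξ : ℝ => Complex.I * ξ * (mN ℓ N ξ : ℂ) * (((1 + ξ ^ 2)⁻¹ : ℝ) : ℂ) *
        prodHat U W ξ)
      ≤ ENNReal.ofReal (2 * Real.sqrt 2 * Real.sqrt π) *
          (HsE 1 (IN ℓ N U) * HsE 1 (IN ℓ N W)) := by
  have hN0 : (0:ℝ) < N := by linarith
  set c : ℝ≥0∞ := ENNReal.ofReal (2 * Real.sqrt 2) with hc
  set g : ℝ → ℝ≥0∞ := fun η => ENNReal.ofReal (rho ℓ N η) * (‖U η‖₊ : ℝ≥0∞) with hg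
  set h : ℝ → ℝ≥0∞ := fun η => ENNReal.ofReal (rho ℓ N η) * (‖W η‖₊ : ℝ≥0∞) with hh
  have hgmeas : Measurable g :=
    ((ENNReal.measurable_ofReal.comp measurable_rho)).mul hU.nnnorm.coe_nnreal_ennreal
  have hhmeas : Measurable h :=
    ((ENNReal.measurable_ofReal.comp measurable_rho)).mul hW.nnnorm.coe_nnreal_ennreal
  -- identification of the H¹ norms of I_N U, I_N W
  have hA : ∀ (Z : ℝ → ℂ) (hZ : Measurable Z),
      HsE 1 (IN ℓ N Z) = (∫⁻ η, (ENNReal.ofReal (rho ℓ N η) * (‖Z η‖₊ : ℝ≥0∞)) ^ (2:ℝ)) ^ (1/2 : ℝ) := by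
    intro Z hZ
    unfold HsE IN
    congr 1
    refine lintegral_congr fun η => ?_
    have hm : (‖(mN ℓ N η : ℂ)‖₊ : ℝ≥0∞) = ENNReal.ofReal (mN ℓ N η) := by
      rw [← enorm_eq_nnnorm, ← ofReal_norm, Complex.norm_real, Real.norm_eq_abs, abs_of_nonneg (mN_nonneg hN0)]
    rw [show ((ENNReal.ofReal (rho ℓ N η) * (‖Z η‖₊ : ℝ≥0∞)) ^ (2:ℝ))
        = (ENNReal.ofReal (rho ℓ N η) * (‖Z η‖₊ : ℝ≥0∞)) ^ (2:ℕ) by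
      rw [← ENNReal.rpow_natCast]; norm_num]
    rw [nnnorm_mul, ENNReal.coe_mul, hm, Real.rpow_one, mul_pow, mul_pow, ← mul_assoc,
      ← ENNReal.ofReal_pow (mN_nonneg hN0), ← ENNReal.ofReal_pow (rho_nonneg hN0),
      ← ENNReal.ofReal_mul (by positivity)]
    congr 2
    unfold rho
    rw [mul_pow, Real.sq_sqrt (by positivity)]
  -- bound on the convolution
  have hP : ∀ ξ : ℝ, (‖prodHat U W ξ‖₊ : ℝ≥0∞) ≤ ∫⁻ η, (‖U η‖₊ : ℝ≥0∞) * (‖W (ξ - η)‖₊ : ℝ≥0∞) := by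
    intro ξ
    unfold prodHat
    rw [convolution_def]
    refine le_trans (enorm_integral_le_lintegral_enorm _) (le_of_eq ?_)
    refine lintegral_congr fun η => ?_
    simp [nnnorm_mul, enorm_eq_nnnorm]
  set A : ℝ≥0∞ := HsE 1 (IN ℓ N U) with hAdef
  set B : ℝ≥0∞ := HsE 1 (IN ℓ N W) with hBdef
  -- Cauchy-Schwarz step
  have hCS : ∀ ξ : ℝ, ENNReal.ofReal (rho ℓ N ξ) * (‖prodHat U W ξ‖₊ : ℝ≥0∞) ≤ c * (A * B) := by
    intro ξ
    have hcomp : Measurable (fun η => h (ξ - η)) :=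
      hhmeas.comp (measurable_const.sub measurable_id)
    calc ENNReal.ofReal (rho ℓ N ξ) * (‖prodHat U W ξ‖₊ : ℝ≥0∞)
        ≤ ENNReal.ofReal (rho ℓ N ξ) * ∫⁻ η, (‖U η‖₊ : ℝ≥0∞) * (‖W (ξ - η)‖₊ : ℝ≥0∞) :=
          mul_le_mul_right (hP ξ) _
      _ = ∫⁻ η, ENNReal.ofReal (rho ℓ N ξ) * ((‖U η‖₊ : ℝ≥0∞) * (‖W (ξ - η)‖₊ : ℝ≥0∞)) :=
          (lintegral_const_mul' _ _ ENNReal.ofReal_ne_top).symm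
      _ ≤ ∫⁻ η, c * (g η * h (ξ - η)) := by
          refine lintegral_mono fun η => ?_
          have h1 : ENNReal.ofReal (rho ℓ N ξ)
              ≤ ENNReal.ofReal (2 * Real.sqrt 2 * (rho ℓ N η * rho ℓ N (ξ - η))) :=
            ENNReal.ofReal_le_ofReal (rho_submul hN hl0 hl1 ξ η)
          calc ENNReal.ofReal (rho ℓ N ξ) * ((‖U η‖₊ : ℝ≥0∞) * (‖W (ξ - η)‖₊ : ℝ≥0∞))
              ≤ ENNReal.ofReal (2 * Real.sqrt 2 * (rho ℓ N η * rho ℓ N (ξ - η))) *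
                  ((‖U η‖₊ : ℝ≥0∞) * (‖W (ξ - η)‖₊ : ℝ≥0∞)) := mul_le_mul_left h1 _
            _ = c * (g η * h (ξ - η)) := by
                rw [ENNReal.ofReal_mul (by positivity), ENNReal.ofReal_mul (rho_nonneg hN0)]
                simp only [hg, hh]
                ring
      _ = c * ∫⁻ η, (g * (fun η => h (ξ - η))) η := by
          rw [lintegral_const_mul' c _ ENNReal.ofReal_ne_top]
          rfl
      _ ≤ c * ((∫⁻ η, g η ^ (2:ℝ)) ^ (1/2 : ℝ) * (∫⁻ η, (h (ξ - η)) ^ (2:ℝ)) ^ (1/2 : ℝ)) := by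
          refine mul_le_mul_right ?_ c
          exact ENNReal.lintegral_mul_le_Lp_mul_Lq volume ⟨by norm_num, by norm_num, by norm_num⟩
            hgmeas.aemeasurable hcomp.aemeasurable
      _ = c * (A * B) := by
          congr 1
          have hchg : ∫⁻ η, (h (ξ - η)) ^ (2:ℝ) = ∫⁻ η, h η ^ (2:ℝ) :=
            (Measure.measurePreserving_sub_left volume ξ).lintegral_comp
              (ENNReal.continuous_rpow_const.measurable.comp hhmeas)
          rw [hchg]
          show (∫⁻ η, (ENNReal.ofReal (rho ℓ N η) * (‖U η‖₊ : ℝ≥0∞)) ^ (2:ℝ)) ^ (1/2 : ℝ) *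
              (∫⁻ η, (ENNReal.ofReal (rho ℓ N η) * (‖W η‖₊ : ℝ≥0∞)) ^ (2:ℝ)) ^ (1/2 : ℝ) = A * B
          rw [hAdef, hBdef, hA U hU, hA W hW]
  -- pointwise bound for the output integrand
  have hpoint : ∀ ξ : ℝ, ENNReal.ofReal ((1 + ξ ^ 2) ^ (1:ℝ)) *
      (‖Complex.I * ξ * (mN ℓ N ξ : ℂ) * (((1 + ξ ^ 2)⁻¹ : ℝ) : ℂ) * prodHat U W ξ‖₊ : ℝ≥0∞) ^ 2
      ≤ ENNReal.ofReal ((1 + ξ ^ 2)⁻¹) * (c * (A * B)) ^ 2 := by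
    intro ξ
    have h1 : (0:ℝ) < 1 + ξ ^ 2 := by positivity
    have e1 : (0:ℝ) ≤ |ξ| * mN ℓ N ξ * (1 + ξ ^ 2)⁻¹ :=
      mul_nonneg (mul_nonneg (abs_nonneg ξ) (mN_nonneg hN0)) (inv_nonneg.mpr h1.le)
    have hnorm : (‖Complex.I * ξ * (mN ℓ N ξ : ℂ) * (((1 + ξ ^ 2)⁻¹ : ℝ) : ℂ) *
        prodHat U W ξ‖₊ : ℝ≥0∞)
        = ENNReal.ofReal (|ξ| * mN ℓ N ξ * (1 + ξ ^ 2)⁻¹) * (‖prodHat U W ξ‖₊ : ℝ≥0∞) := by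
      rw [← enorm_eq_nnnorm, ← ofReal_norm, ← enorm_eq_nnnorm (prodHat U W ξ), ← ofReal_norm (prodHat U W ξ),
        ← ENNReal.ofReal_mul e1]
      congr 1
      simp only [norm_mul, Complex.norm_I, Complex.norm_real, Real.norm_eq_abs, one_mul]
      rw [abs_of_nonneg (mN_nonneg hN0), abs_of_nonneg (inv_nonneg.mpr h1.le)]
    rw [hnorm]
    have hkey : ENNReal.ofReal ((1 + ξ ^ 2) ^ (1:ℝ)) *
        (ENNReal.ofReal (|ξ| * mN ℓ N ξ * (1 + ξ ^ 2)⁻¹) * (‖prodHat U W ξ‖₊ : ℝ≥0∞)) ^ 2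
        = ENNReal.ofReal ((|ξ| / (1 + ξ ^ 2)) ^ 2) *
          (ENNReal.ofReal (rho ℓ N ξ) * (‖prodHat U W ξ‖₊ : ℝ≥0∞)) ^ 2 := by
      rw [mul_pow, mul_pow, ← ENNReal.ofReal_pow e1,
        ← ENNReal.ofReal_pow (rho_nonneg hN0), ← mul_assoc, ← mul_assoc,
        ← ENNReal.ofReal_mul (Real.rpow_nonneg h1.le 1),
        ← ENNReal.ofReal_mul (pow_nonneg (by positivity) 2)]
      congr 2
      rw [Real.rpow_one]
      unfold rho
      have hs : Real.sqrt (1 + ξ ^ 2) ^ 2 = 1 + ξ ^ 2 := Real.sq_sqrt h1.le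
      rw [mul_pow (Real.sqrt (1 + ξ ^ 2)) (mN ℓ N ξ), hs, mul_pow, mul_pow, div_pow, sq_abs]
      field_simp
    rw [hkey]
    have h2 : (ENNReal.ofReal (rho ℓ N ξ) * (‖prodHat U W ξ‖₊ : ℝ≥0∞)) ^ 2 ≤ (c * (A * B)) ^ 2 := by
      rw [pow_two, pow_two]
      exact mul_le_mul' (hCS ξ) (hCS ξ)
    have h3 : ENNReal.ofReal ((|ξ| / (1 + ξ ^ 2)) ^ 2) ≤ ENNReal.ofReal ((1 + ξ ^ 2)⁻¹) := by
      refine ENNReal.ofReal_le_ofReal ?_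
      rw [div_pow, sq_abs, inv_eq_one_div, div_le_div_iff₀ (by positivity) (by positivity)]
      nlinarith
    exact mul_le_mul' h3 h2
  -- assemble
  unfold HsE
  calc (∫⁻ ξ : ℝ, ENNReal.ofReal ((1 + ξ ^ 2) ^ (1:ℝ)) *
        (‖Complex.I * ξ * (mN ℓ N ξ : ℂ) * (((1 + ξ ^ 2)⁻¹ : ℝ) : ℂ) *
          prodHat U W ξ‖₊ : ℝ≥0∞) ^ 2) ^ (1/2 : ℝ)
      ≤ (∫⁻ ξ : ℝ, ENNReal.ofReal ((1 + ξ ^ 2)⁻¹) * (c * (A * B)) ^ 2) ^ (1/2 : ℝ) :=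
        ENNReal.rpow_le_rpow (lintegral_mono hpoint) (by norm_num)
    _ = ((∫⁻ ξ : ℝ, ENNReal.ofReal ((1 + ξ ^ 2)⁻¹)) * (c * (A * B)) ^ 2) ^ (1/2 : ℝ) := by
        have hfm : Measurable (fun ξ : ℝ => ENNReal.ofReal ((1 + ξ ^ 2)⁻¹)) := by
          measurability
        rw [lintegral_mul_const _ hfm]
    _ = (ENNReal.ofReal π * (c * (A * B)) ^ 2) ^ (1/2 : ℝ) := by
        congr 2
        rw [← integral_univ_inv_one_add_sq]
        exact (ofReal_integral_eq_lintegral_ofReal integrable_inv_one_add_sq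
          (Filter.Eventually.of_forall fun x => by positivity)).symm
    _ = (ENNReal.ofReal π) ^ (1/2 : ℝ) * (((c * (A * B)) ^ 2) ^ (1/2 : ℝ)) :=
        ENNReal.mul_rpow_of_nonneg _ _ (by norm_num)
    _ = ENNReal.ofReal (Real.sqrt π) * (c * (A * B)) := by
        congr 1
        · rw [ENNReal.ofReal_rpow_of_pos Real.pi_pos, Real.sqrt_eq_rpow]
        · rw [← ENNReal.rpow_natCast (c * (A * B)) 2, ← ENNReal.rpow_mul]
          norm_num
    _ = ENNReal.ofReal (2 * Real.sqrt 2 * Real.sqrt π) * (A * B) := by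
        rw [hc, ← mul_assoc, ← ENNReal.ofReal_mul (Real.sqrt_nonneg π),
          mul_comm (Real.sqrt π) (2 * Real.sqrt 2)]


/-- Time-integrated bilinear estimate:
`∫₀ᵀ ‖(I−∂ₓₓ)⁻¹ I_N ∂ₓ(u(s)v(s))‖_{H¹} ds ≤ C T ‖I_N u‖_{Y¹_{0,T}} ‖I_N v‖_{Y¹_{0,T}}`,
with `C` independent of `N` and `T`. -/
theorem stmt5 (ℓ : ℝ) (hl0 : 0 ≤ ℓ) (hl1 : ℓ < 1) :
    ∃ C > (0 : ℝ), ∀ N : ℝ, 1 ≤ N → ∀ T > (0 : ℝ), ∀ u v : ℝ → V,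
      HContOn ℓ u (Icc 0 T) → HContOn ℓ v (Icc 0 T) →
      YE 1 0 T (fun t => IN ℓ N (u t : ℝ → ℂ)) < ⊤ →
      YE 1 0 T (fun t => IN ℓ N (v t : ℝ → ℂ)) < ⊤ →
      (∫⁻ s in Icc (0 : ℝ) T,
          HsE 1 (fun ξ : ℝ => Complex.I * ξ * (mN ℓ N ξ : ℂ) * (((1 + ξ ^ 2)⁻¹ : ℝ) : ℂ) *
            prodHat (u s : ℝ → ℂ) (v s : ℝ → ℂ) ξ)) ≤
        ENNReal.ofReal (C * T) *
          (YE 1 0 T (fun t => IN ℓ N (u t : ℝ → ℂ)) *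
            YE 1 0 T (fun t => IN ℓ N (v t : ℝ → ℂ))) := by
  have hC : (0:ℝ) < 2 * Real.sqrt 2 * Real.sqrt π := by positivity
  refine ⟨2 * Real.sqrt 2 * Real.sqrt π, hC, ?_⟩
  intro N hN T hT u v _ _ _ _
  have hl1' : ℓ ≤ 1 := hl1.le
  -- fixed-time estimate, for the genuine (a.e.-class) functions
  have key2 : ∀ s : ℝ,
      HsE 1 (fun ξ : ℝ => Complex.I * ξ * (mN ℓ N ξ : ℂ) * (((1 + ξ ^ 2)⁻¹ : ℝ) : ℂ) *
          prodHat (u s : ℝ → ℂ) (v s : ℝ → ℂ) ξ)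
        ≤ ENNReal.ofReal (2 * Real.sqrt 2 * Real.sqrt π) *
            (HsE 1 (IN ℓ N (u s : ℝ → ℂ)) * HsE 1 (IN ℓ N (v s : ℝ → ℂ))) := by
    intro s
    have hUm : AEMeasurable (u s : ℝ → ℂ) volume := (Lp.aestronglyMeasurable (u s)).aemeasurable
    have hWm : AEMeasurable (v s : ℝ → ℂ) volume := (Lp.aestronglyMeasurable (v s)).aemeasurable
    set U' : ℝ → ℂ := hUm.mk _ with hU'def
    set W' : ℝ → ℂ := hWm.mk _ with hW'def
    have hUeq : (u s : ℝ → ℂ) =ᵐ[volume] U' := hUm.ae_eq_mk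
    have hWeq : (v s : ℝ → ℂ) =ᵐ[volume] W' := hWm.ae_eq_mk
    have hprod : ∀ ξ : ℝ, prodHat (u s : ℝ → ℂ) (v s : ℝ → ℂ) ξ = prodHat U' W' ξ := by
      intro ξ
      unfold prodHat
      rw [convolution_def, convolution_def]
      refine integral_congr_ae ?_
      have h2 : (fun η : ℝ => (v s : ℝ → ℂ) (ξ - η)) =ᵐ[volume]
          (fun η : ℝ => W' (ξ - η)) :=
        (Measure.measurePreserving_sub_left volume ξ).quasiMeasurePreserving.ae_eq_comp hWeq
      filter_upwards [hUeq, h2] with η e1 e2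
      rw [e1, e2]
    have hHsE1 : HsE 1 (fun ξ : ℝ => Complex.I * ξ * (mN ℓ N ξ : ℂ) *
          (((1 + ξ ^ 2)⁻¹ : ℝ) : ℂ) * prodHat (u s : ℝ → ℂ) (v s : ℝ → ℂ) ξ)
        = HsE 1 (fun ξ : ℝ => Complex.I * ξ * (mN ℓ N ξ : ℂ) *
          (((1 + ξ ^ 2)⁻¹ : ℝ) : ℂ) * prodHat U' W' ξ) :=
      congrArg (HsE 1) (funext fun ξ => by rw [hprod ξ])
    have hINu : HsE 1 (IN ℓ N (u s : ℝ → ℂ)) = HsE 1 (IN ℓ N U') := by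
      unfold HsE
      congr 1
      refine lintegral_congr_ae ?_
      filter_upwards [hUeq] with η e1
      unfold IN
      rw [e1]
    have hINv : HsE 1 (IN ℓ N (v s : ℝ → ℂ)) = HsE 1 (IN ℓ N W') := by
      unfold HsE
      congr 1
      refine lintegral_congr_ae ?_
      filter_upwards [hWeq] with η e1
      unfold IN
      rw [e1]
    rw [hHsE1, hINu, hINv]
    exact key_bilinear hl0 hl1' hN hUm.measurable_mk hWm.measurable_mk
  set Su : ℝ≥0∞ := ⨆ t ∈ Icc (0:ℝ) (0 + T), HsE 1 (IN ℓ N (u t : ℝ → ℂ)) with hSu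
  set Sv : ℝ≥0∞ := ⨆ t ∈ Icc (0:ℝ) (0 + T), HsE 1 (IN ℓ N (v t : ℝ → ℂ)) with hSv
  have hbound : ∀ s ∈ Icc (0:ℝ) T,
      HsE 1 (fun ξ : ℝ => Complex.I * ξ * (mN ℓ N ξ : ℂ) * (((1 + ξ ^ 2)⁻¹ : ℝ) : ℂ) *
          prodHat (u s : ℝ → ℂ) (v s : ℝ → ℂ) ξ)
        ≤ ENNReal.ofReal (2 * Real.sqrt 2 * Real.sqrt π) * (Su * Sv) := by
    intro s hs
    refine (key2 s).trans ?_
    have hs' : s ∈ Icc (0:ℝ) (0 + T) := by rwa [zero_add]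
    have h1 : HsE 1 (IN ℓ N (u s : ℝ → ℂ)) ≤ Su :=
      le_biSup (fun t => HsE 1 (IN ℓ N (u t : ℝ → ℂ))) hs'
    have h2 : HsE 1 (IN ℓ N (v s : ℝ → ℂ)) ≤ Sv :=
      le_biSup (fun t => HsE 1 (IN ℓ N (v t : ℝ → ℂ))) hs'
    exact mul_le_mul_right (mul_le_mul' h1 h2) _
  have hYu : Su ≤ YE 1 0 T (fun t => IN ℓ N (u t : ℝ → ℂ)) := by
    rw [YE]; exact le_self_add
  have hYv : Sv ≤ YE 1 0 T (fun t => IN ℓ N (v t : ℝ → ℂ)) := by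
    rw [YE]; exact le_self_add
  calc (∫⁻ s in Icc (0 : ℝ) T,
          HsE 1 (fun ξ : ℝ => Complex.I * ξ * (mN ℓ N ξ : ℂ) * (((1 + ξ ^ 2)⁻¹ : ℝ) : ℂ) *
            prodHat (u s : ℝ → ℂ) (v s : ℝ → ℂ) ξ))
      ≤ ∫⁻ _ in Icc (0 : ℝ) T, ENNReal.ofReal (2 * Real.sqrt 2 * Real.sqrt π) * (Su * Sv) :=
        setLIntegral_mono measurable_const hbound
    _ = ENNReal.ofReal (2 * Real.sqrt 2 * Real.sqrt π) * (Su * Sv) * volume (Icc (0:ℝ) T) :=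
        setLIntegral_const _ _
    _ = ENNReal.ofReal (2 * Real.sqrt 2 * Real.sqrt π) * ENNReal.ofReal T * (Su * Sv) := by
        rw [Real.volume_Icc, sub_zero]
        ring
    _ ≤ ENNReal.ofReal (2 * Real.sqrt 2 * Real.sqrt π * T) *
          (YE 1 0 T (fun t => IN ℓ N (u t : ℝ → ℂ)) *
            YE 1 0 T (fun t => IN ℓ N (v t : ℝ → ℂ))) := by
        rw [ENNReal.ofReal_mul hC.le]
        exact mul_le_mul_right (mul_le_mul' hYu hYv) _
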